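/- arXiv:math/0109074 — 2 statements merged into one kernel-verified Lean document; each statement's English description precedes it below -/
import Mathlib

section
/- Let A be a complex n×n matrix, λ ∈ ℂ, and x, b ∈ ℂⁿ with b ≠ 0 and (λI - A)x = b. Then either ρ_x(A) > ρ_b(A) and ρ_x(A) = |λ|, or ρ_x(A) = ρ_b(A). -/
/-!
Put `f m = A ^ m x` and `g m = A ^ m b`, so that `f (m + 1) = λ f m - g m`. Unrolling,
`λ ^ j f m = f (m + j) + ∑_{i<j} λ ^ (j-1-i) g (m + i)`. The recurrence itself gives
`ρ_b ≤ ρ_x`; the unrolled identity at `m = 0`, summed as a geometric series, gives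
`ρ_x ≤ max |λ| ρ_b`; and when `ρ_x < |λ|`, dividing by `λ ^ j` and letting `j → ∞` bounds
`f m` by a geometric tail of `g`, so `ρ_x ≤ ρ_b`. Hence `ρ_b < ρ_x` forces `ρ_x = |λ|`.
-/

open Filter Matrix
open scoped Topology

/-- The local spectral radius of a complex matrix `A` at `v`. -/
noncomputable def localRhoC {n : ℕ} (A : Matrix (Fin n) (Fin n) ℂ) (v : Fin n → ℂ) : ℝ :=
  limsup (fun m : ℕ => ‖(A ^ m).mulVec v‖ ^ ((1 : ℝ) / m)) atTop

open Asymptotics Finset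

/-- `localRhoC A v` is `growthRate (fun m => (A ^ m) *ᵥ v)` by definition. The hypotheses
`u =O[atTop] (s ^ ·)` below rule out the junk value `0` that `limsup` takes on sequences that are
not bounded above. -/
noncomputable def growthRate {E : Type*} [Norm E] (u : ℕ → E) : ℝ :=
  limsup (fun m : ℕ => ‖u m‖ ^ ((1 : ℝ) / m)) atTop

section GrowthRate

variable {E : Type*} [SeminormedAddCommGroup E] {u : ℕ → E} {s t : ℝ}

theorem eventually_rpow_lt_of_isBigO (h : u =O[atTop] (t ^ ·)) {t' : ℝ} (ht : |t| < t') :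
    ∀ᶠ m : ℕ in atTop, ‖u m‖ ^ ((1 : ℝ) / m) < t' := by
  obtain ⟨C, hC, hCu⟩ := h.exists_pos
  have hroot : Tendsto (fun m : ℕ => C ^ ((1 : ℝ) / m) * |t|) atTop (𝓝 |t|) := by
    simpa using (tendsto_const_nhds.rpow tendsto_one_div_atTop_nhds_zero_nat
      (Or.inl hC.ne')).mul_const |t|
  filter_upwards [hCu.bound, hroot.eventually (gt_mem_nhds ht), eventually_ne_atTop 0]
    with m hm hlt hm0
  calc ‖u m‖ ^ ((1 : ℝ) / m) ≤ (C * |t| ^ m) ^ ((1 : ℝ) / m) := by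
        rw [norm_pow, Real.norm_eq_abs] at hm
        gcongr
    _ = C ^ ((1 : ℝ) / m) * |t| := by
        rw [Real.mul_rpow hC.le (by positivity), one_div,
          Real.pow_rpow_inv_natCast (abs_nonneg t) hm0]
    _ < t' := hlt

theorem isBoundedUnder_of_isBigO (h : u =O[atTop] (t ^ ·)) :
    IsBoundedUnder (· ≤ ·) atTop (fun m : ℕ => ‖u m‖ ^ ((1 : ℝ) / m)) :=
  isBoundedUnder_of_eventually_le
    ((eventually_rpow_lt_of_isBigO h (lt_add_one _)).mono fun _ => le_of_lt)

theorem growthRate_nonneg (h : u =O[atTop] (t ^ ·)) : 0 ≤ growthRate u :=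
  le_limsup_of_frequently_le (Frequently.of_forall fun _ => by positivity)
    (isBoundedUnder_of_isBigO h)

theorem growthRate_le_of_isBigO (ht : 0 ≤ t) (h : u =O[atTop] (t ^ ·)) : growthRate u ≤ t := by
  refine le_of_forall_gt_imp_ge_of_dense fun t' ht' => limsup_le_of_le ?_ ?_
  · exact isCoboundedUnder_le_of_le atTop fun _ => by positivity
  · rw [← abs_of_nonneg ht] at ht'
    exact (eventually_rpow_lt_of_isBigO h ht').mono fun _ => le_of_lt

theorem isBigO_of_growthRate_lt (h : u =O[atTop] (s ^ ·)) (hlt : growthRate u < t) :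
    u =O[atTop] (t ^ ·) := by
  refine IsBigO.of_bound 1 ?_
  filter_upwards [eventually_lt_of_limsup_lt hlt (isBoundedUnder_of_isBigO h),
    eventually_ne_atTop 0] with m hm hm0
  have ht : 0 ≤ t := (by positivity : (0 : ℝ) ≤ _).trans hm.le
  rw [one_mul, norm_pow, Real.norm_of_nonneg ht,
    ← Real.rpow_inv_natCast_pow (norm_nonneg (u m)) hm0, ← one_div]
  exact pow_le_pow_left₀ (by positivity) hm.le m

end GrowthRate

theorem geom_sum₂_le_div_sub {a b : ℝ} (ha : 0 ≤ a) (hab : a < b) (n : ℕ) :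
    ∑ i ∈ range n, a ^ i * b ^ (n - 1 - i) ≤ b ^ n / (b - a) := by
  rw [le_div_iff₀ (sub_pos.2 hab), geom_sum₂_mul_of_le hab.le]
  linarith [pow_nonneg ha n]

theorem geom_sum₂_le_div_sub' {a b : ℝ} (hb : 0 ≤ b) (hba : b < a) (n : ℕ) :
    ∑ i ∈ range n, a ^ i * b ^ (n - 1 - i) ≤ a ^ n / (a - b) := by
  rw [le_div_iff₀ (sub_pos.2 hba), geom_sum₂_mul_of_ge hba.le]
  linarith [pow_nonneg hb n]

theorem le_of_forall_pow_mul_le {a t x B D : ℝ} (ht : 0 ≤ t) (hta : t < a)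
    (h : ∀ j : ℕ, a ^ j * x ≤ B * t ^ j + a ^ j * D) : x ≤ D := by
  have ha : 0 < a := ht.trans_lt hta
  have hlim : Tendsto (fun j : ℕ => B * (t / a) ^ j + D) atTop (𝓝 (B * 0 + D)) :=
    ((tendsto_pow_atTop_nhds_zero_of_lt_one (by positivity)
      ((div_lt_one ha).2 hta)).const_mul B).add_const D
  refine ge_of_tendsto (by simpa using hlim) (Eventually.of_forall fun j => ?_)
  have hj : 0 < a ^ j := pow_pos ha j
  calc x ≤ (B * t ^ j + a ^ j * D) / a ^ j := (le_div_iff₀' hj).2 (h j)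
    _ = B * (t / a) ^ j + D := by rw [div_pow]; field_simp

section Recurrence

variable {𝕜 E : Type*} [NormedField 𝕜] [SeminormedAddCommGroup E] [NormedSpace 𝕜 E]
  {f g : ℕ → E} {c : 𝕜} {s t u : ℝ}

theorem pow_smul_eq_add_sum (hrec : ∀ m, f (m + 1) = c • f m - g m) (m j : ℕ) :
    c ^ j • f m = f (m + j) + ∑ i ∈ range j, c ^ (j - 1 - i) • g (m + i) := by
  induction j generalizing m with
  | zero => simp
  | succ j ih =>
    have hstep : c • f m = f (m + 1) + g m := by rw [hrec]; abel
    rw [pow_succ, mul_smul, hstep, smul_add, ih, sum_range_succ', add_assoc]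
    simp only [Nat.sub_sub, Nat.add_sub_cancel, Nat.sub_zero, add_zero, add_assoc m 1, add_comm 1]

theorem norm_le_pow_mul_add_sum (hrec : ∀ m, f (m + 1) = c • f m - g m) (j : ℕ) :
    ‖f j‖ ≤ ‖c‖ ^ j * ‖f 0‖ + ∑ i ∈ range j, ‖c‖ ^ (j - 1 - i) * ‖g i‖ := by
  have h := pow_smul_eq_add_sum hrec 0 j
  simp only [zero_add] at h
  rw [eq_sub_of_add_eq h.symm]
  refine (norm_sub_le _ _).trans (add_le_add (norm_smul_le _ _ |>.trans_eq ?_) ?_)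
  · rw [norm_pow]
  · refine (norm_sum_le _ _).trans (sum_le_sum fun i _ => ?_)
    rw [norm_smul, norm_pow]

theorem pow_mul_norm_le_add_sum (hrec : ∀ m, f (m + 1) = c • f m - g m) (m j : ℕ) :
    ‖c‖ ^ j * ‖f m‖ ≤ ‖f (m + j)‖ + ∑ i ∈ range j, ‖c‖ ^ (j - 1 - i) * ‖g (m + i)‖ := by
  rw [← norm_pow, ← norm_smul, pow_smul_eq_add_sum hrec]
  refine (norm_add_le _ _).trans (add_le_add_right ((norm_sum_le _ _).trans
    (sum_le_sum fun i _ => ?_)) _)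
  rw [norm_smul, norm_pow]

theorem isBigO_of_succ_eq (hrec : ∀ m, f (m + 1) = c • f m - g m) (hf : f =O[atTop] (t ^ ·)) :
    g =O[atTop] (t ^ ·) := by
  have hg : g = fun m => c • f m - f (m + 1) := funext fun m => by rw [hrec]; abel
  have hshift : (fun m => f (m + 1)) =O[atTop] (t ^ ·) :=
    (hf.comp_tendsto (tendsto_add_atTop_nat 1)).trans
      ((isBigO_refl (t ^ ·) atTop).const_mul_left t |>.congr_left fun m => (pow_succ' t m).symm)
  exact hg ▸ (hf.const_smul_left c).sub hshift

theorem isBigO_pow_of_norm_lt (hrec : ∀ m, f (m + 1) = c • f m - g m) (hcu : ‖c‖ < u)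
    (hg : g =O[atTop] (u ^ ·)) : f =O[atTop] (u ^ ·) := by
  have hu : 0 < u := (norm_nonneg c).trans_lt hcu
  obtain ⟨C, hC, hCg⟩ := bound_of_isBigO_nat_atTop hg
  refine IsBigO.of_bound (‖f 0‖ + C / (u - ‖c‖)) (Eventually.of_forall fun j => ?_)
  have hgi : ∀ i, ‖g i‖ ≤ C * u ^ i := fun i => by
    simpa [abs_of_pos hu] using hCg (pow_ne_zero i hu.ne')
  calc ‖f j‖ ≤ ‖c‖ ^ j * ‖f 0‖ + ∑ i ∈ range j, ‖c‖ ^ (j - 1 - i) * ‖g i‖ :=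
        norm_le_pow_mul_add_sum hrec j
    _ ≤ u ^ j * ‖f 0‖ + C * ∑ i ∈ range j, u ^ i * ‖c‖ ^ (j - 1 - i) := by
        rw [mul_sum]
        refine add_le_add (by gcongr) (sum_le_sum fun i _ => ?_)
        calc ‖c‖ ^ (j - 1 - i) * ‖g i‖ ≤ ‖c‖ ^ (j - 1 - i) * (C * u ^ i) := by gcongr; exact hgi i
          _ = C * (u ^ i * ‖c‖ ^ (j - 1 - i)) := by ring
    _ ≤ u ^ j * ‖f 0‖ + C * (u ^ j / (u - ‖c‖)) := by
        gcongr
        exact geom_sum₂_le_div_sub' (norm_nonneg c) hcu j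
    _ = (‖f 0‖ + C / (u - ‖c‖)) * ‖u ^ j‖ := by
        rw [norm_pow, Real.norm_of_nonneg hu.le]; ring

theorem isBigO_pow_of_lt_norm (hrec : ∀ m, f (m + 1) = c • f m - g m) (ht : 0 ≤ t)
    (htc : t < ‖c‖) (hf : f =O[atTop] (t ^ ·)) (hu : 0 ≤ u) (huc : u < ‖c‖)
    (hg : g =O[atTop] (u ^ ·)) : f =O[atTop] (u ^ ·) := by
  obtain ⟨C₁, -, hC₁⟩ := hf.exists_pos
  obtain ⟨C₂, hC₂, hC₂g⟩ := hg.exists_pos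
  obtain ⟨N, hN⟩ := eventually_atTop.1 (hC₁.bound.and hC₂g.bound)
  have hfk : ∀ k ≥ N, ‖f k‖ ≤ C₁ * t ^ k := fun k hk => by
    simpa [abs_of_nonneg ht] using (hN k hk).1
  have hgk : ∀ k ≥ N, ‖g k‖ ≤ C₂ * u ^ k := fun k hk => by
    simpa [abs_of_nonneg hu] using (hN k hk).2
  refine IsBigO.of_bound (C₂ / (‖c‖ - u)) ((eventually_ge_atTop N).mono fun m hm => ?_)
  rw [norm_pow, Real.norm_of_nonneg hu]
  refine le_of_forall_pow_mul_le (B := C₁ * t ^ m) ht htc fun j => ?_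
  calc ‖c‖ ^ j * ‖f m‖
      ≤ ‖f (m + j)‖ + ∑ i ∈ range j, ‖c‖ ^ (j - 1 - i) * ‖g (m + i)‖ :=
        pow_mul_norm_le_add_sum hrec m j
    _ ≤ C₁ * t ^ m * t ^ j + ∑ i ∈ range j, C₂ * u ^ m * (u ^ i * ‖c‖ ^ (j - 1 - i)) := by
        rw [mul_assoc, ← pow_add]
        refine add_le_add (hfk _ (by omega)) (sum_le_sum fun i _ => ?_)
        calc ‖c‖ ^ (j - 1 - i) * ‖g (m + i)‖ ≤ ‖c‖ ^ (j - 1 - i) * (C₂ * u ^ (m + i)) := by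
              gcongr; exact hgk _ (by omega)
          _ = C₂ * u ^ m * (u ^ i * ‖c‖ ^ (j - 1 - i)) := by ring
    _ ≤ C₁ * t ^ m * t ^ j + C₂ * u ^ m * (‖c‖ ^ j / (‖c‖ - u)) := by
        rw [← mul_sum]
        gcongr
        exact geom_sum₂_le_div_sub hu huc j
    _ = C₁ * t ^ m * t ^ j + ‖c‖ ^ j * (C₂ / (‖c‖ - u) * u ^ m) := by ring

theorem growthRate_le_of_succ_eq (hrec : ∀ m, f (m + 1) = c • f m - g m)
    (hf : f =O[atTop] (s ^ ·)) : growthRate g ≤ growthRate f :=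
  le_of_forall_gt_imp_ge_of_dense fun _ ht =>
    growthRate_le_of_isBigO ((growthRate_nonneg hf).trans ht.le)
      (isBigO_of_succ_eq hrec (isBigO_of_growthRate_lt hf ht))

theorem growthRate_le_max_norm (hrec : ∀ m, f (m + 1) = c • f m - g m)
    (hf : f =O[atTop] (s ^ ·)) : growthRate f ≤ max ‖c‖ (growthRate g) :=
  le_of_forall_gt_imp_ge_of_dense fun u hu => by
    rw [max_lt_iff] at hu
    exact growthRate_le_of_isBigO ((norm_nonneg c).trans hu.1.le)
      (isBigO_pow_of_norm_lt hrec hu.1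
        (isBigO_of_growthRate_lt (isBigO_of_succ_eq hrec hf) hu.2))

theorem growthRate_le_of_lt_norm (hrec : ∀ m, f (m + 1) = c • f m - g m)
    (hf : f =O[atTop] (s ^ ·)) (hfc : growthRate f < ‖c‖) : growthRate f ≤ growthRate g := by
  have hg := isBigO_of_succ_eq hrec hf
  refine le_of_forall_gt_imp_ge_of_dense fun u hu => ?_
  have hu0 : 0 ≤ u := (growthRate_nonneg hg).trans hu.le
  rcases le_or_gt ‖c‖ u with hcu | huc
  · exact hfc.le.trans hcu
  obtain ⟨t, hft, htc⟩ := exists_between hfc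
  exact growthRate_le_of_isBigO hu0
    (isBigO_pow_of_lt_norm hrec ((growthRate_nonneg hf).trans hft.le) htc
      (isBigO_of_growthRate_lt hf hft) hu0 huc (isBigO_of_growthRate_lt hg hu))

theorem growthRate_eq_norm_or_eq (hrec : ∀ m, f (m + 1) = c • f m - g m)
    (hf : f =O[atTop] (s ^ ·)) :
    (growthRate g < growthRate f ∧ growthRate f = ‖c‖) ∨ growthRate f = growthRate g := by
  rcases (growthRate_le_of_succ_eq hrec hf).lt_or_eq with hlt | heq
  · refine Or.inl ⟨hlt, le_antisymm ?_ ?_⟩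
    · exact (le_max_iff.1 (growthRate_le_max_norm hrec hf)).resolve_right hlt.not_ge
    · exact not_lt.1 fun hfc => (growthRate_le_of_lt_norm hrec hf hfc).not_gt hlt
  · exact Or.inr heq.symm

end Recurrence

section Matrix

variable {ι R : Type*} [Fintype ι] [DecidableEq ι]

theorem pow_succ_mulVec_eq [CommRing R] {A : Matrix ι ι R} {c : R} {x b : ι → R}
    (hsol : (c • (1 : Matrix ι ι R) - A) *ᵥ x = b) (m : ℕ) :
    (A ^ (m + 1)) *ᵥ x = c • ((A ^ m) *ᵥ x) - (A ^ m) *ᵥ b := by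
  rw [← hsol, mulVec_mulVec, mul_sub, mul_smul_comm, mul_one, ← pow_succ, sub_mulVec,
    smul_mulVec, sub_sub_cancel]

attribute [local instance] Matrix.linftyOpNormedRing in
theorem isBigO_pow_mulVec [NormedRing R] (A : Matrix ι ι R) (v : ι → R) :
    (fun m => (A ^ m) *ᵥ v) =O[atTop] (‖A‖ ^ ·) := by
  refine IsBigO.of_bound ‖v‖ (Eventually.of_forall fun m => ?_)
  rw [norm_pow, norm_norm, mul_comm]
  rcases m with _ | m
  · simp
  · exact (linfty_opNorm_mulVec _ v).trans (by gcongr; exact norm_pow_le' A m.succ_pos)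

end Matrix

theorem stmt8_general {n : ℕ} (A : Matrix (Fin n) (Fin n) ℂ) (lam : ℂ) (x b : Fin n → ℂ)
    (hsol : (lam • (1 : Matrix (Fin n) (Fin n) ℂ) - A).mulVec x = b) :
    (localRhoC A b < localRhoC A x ∧ localRhoC A x = ‖lam‖) ∨
      localRhoC A x = localRhoC A b :=
  growthRate_eq_norm_or_eq (f := fun m => (A ^ m) *ᵥ x) (g := fun m => (A ^ m) *ᵥ b)
    (pow_succ_mulVec_eq hsol) (isBigO_pow_mulVec A x)

theorem stmt8 {n : ℕ} (A : Matrix (Fin n) (Fin n) ℂ) (lam : ℂ) (x b : Fin n → ℂ)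
    (hb : b ≠ 0) (hsol : (lam • (1 : Matrix (Fin n) (Fin n) ℂ) - A).mulVec x = b) :
    (localRhoC A b < localRhoC A x ∧ localRhoC A x = ‖lam‖) ∨
      localRhoC A x = localRhoC A b :=
  stmt8_general A lam x b hsol
end

section
/- Let A be a complex n×n matrix, b ∈ ℂⁿ nonzero, and λ ∈ ℂ with |λ| > ρ_b(A). Then x⁰ = ∑_{j=0}^∞ λ^{-j-1} A^j b converges, satisfies (λI - A)x⁰ = b, and ρ_{x⁰}(A) = ρ_b(A); moreover any other solution x of (λI - A)x = b satisfies ρ_x(A) = |λ|. -/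
/-! The Neumann series converges because, for any `r` strictly between `ρ_b(A)` and `‖λ‖`, its
terms are eventually dominated by `‖λ‖⁻¹ (r / ‖λ‖) ^ j`. The same domination applied to
`A ^ m x⁰ = ∑ λ⁻¹ ^ (j + 1) A ^ (m + j) b` gives `ρ_{x⁰} ≤ ρ_b`, and `b = (λ - A) x⁰` with `λ - A`
commuting with `A` gives the reverse inequality. Any other solution is `x⁰ + y` with `y` an
eigenvector for `λ`, so `ρ_y = ‖λ‖`; as `ρ_{v + w} ≤ max ρ_v ρ_w` and `ρ_{x⁰} < ‖λ‖`, this forces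
`ρ_{x⁰ + y} = ‖λ‖`. -/

open Filter Matrix
open scoped Topology

section RootBounds

lemma tendsto_rpow_one_div_natCast {C : ℝ} (hC : 0 < C) :
    Tendsto (fun m : ℕ => C ^ ((1 : ℝ) / m)) atTop (𝓝 1) := by
  simpa [Function.comp_def] using (Real.continuousAt_const_rpow (b := 0) hC.ne').tendsto.comp
    tendsto_one_div_atTop_nhds_zero_nat

variable {u : ℕ → ℝ} {C r : ℝ}

lemma eventually_rpow_one_div_le (hu : ∀ m, 0 ≤ u m) (hC : 0 ≤ C) (hr : 0 ≤ r)
    (h : ∀ᶠ m in atTop, u m ≤ C * r ^ m) :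
    ∀ᶠ m : ℕ in atTop, u m ^ ((1 : ℝ) / m) ≤ C ^ ((1 : ℝ) / m) * r := by
  filter_upwards [h, eventually_ne_atTop 0] with m hm hm0
  calc u m ^ ((1 : ℝ) / m) ≤ (C * r ^ m) ^ ((1 : ℝ) / m) :=
        Real.rpow_le_rpow (hu m) hm (by positivity)
    _ = C ^ ((1 : ℝ) / m) * r := by
        rw [Real.mul_rpow hC (by positivity), one_div, Real.pow_rpow_inv_natCast hr hm0]

lemma isBoundedUnder_rpow_one_div (hu : ∀ m, 0 ≤ u m) (hC : 0 < C) (hr : 0 ≤ r)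
    (h : ∀ᶠ m in atTop, u m ≤ C * r ^ m) :
    IsBoundedUnder (· ≤ ·) atTop fun m : ℕ => u m ^ ((1 : ℝ) / m) :=
  ((tendsto_rpow_one_div_natCast hC).mul_const r).isBoundedUnder_le.mono_le
    (eventually_rpow_one_div_le hu hC.le hr h)

lemma limsup_rpow_one_div_le (hu : ∀ m, 0 ≤ u m) (hr : 0 ≤ r)
    (h : ∀ᶠ m in atTop, u m ≤ C * r ^ m) :
    limsup (fun m : ℕ => u m ^ ((1 : ℝ) / m)) atTop ≤ r := by
  have hC' : 0 < max C 1 := lt_max_of_lt_right one_pos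
  have h' : ∀ᶠ m in atTop, u m ≤ max C 1 * r ^ m := h.mono fun m hm =>
    hm.trans (mul_le_mul_of_nonneg_right (le_max_left C 1) (pow_nonneg hr m))
  have hlim : Tendsto (fun m : ℕ => max C 1 ^ ((1 : ℝ) / m) * r) atTop (𝓝 r) := by
    simpa using (tendsto_rpow_one_div_natCast hC').mul_const r
  have hcobdd : IsCoboundedUnder (· ≤ ·) atTop fun m : ℕ => u m ^ ((1 : ℝ) / m) :=
    isBoundedUnder_of ⟨0, fun m => Real.rpow_nonneg (hu m) _⟩ |>.isCoboundedUnder_le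
  calc limsup (fun m : ℕ => u m ^ ((1 : ℝ) / m)) atTop
      ≤ limsup (fun m : ℕ => max C 1 ^ ((1 : ℝ) / m) * r) atTop :=
        limsup_le_limsup (eventually_rpow_one_div_le hu hC'.le hr h') hcobdd
          hlim.isBoundedUnder_le
    _ = r := hlim.limsup_eq

end RootBounds

section LocalSpectralRadius

attribute [local instance] Matrix.linftyOpSeminormedAddCommGroup

variable {n : ℕ} (A : Matrix (Fin n) (Fin n) ℂ)

lemma norm_pow_mulVec_le (v : Fin n → ℂ) (m : ℕ) : ‖(A ^ m) *ᵥ v‖ ≤ ‖A‖ ^ m * ‖v‖ := by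
  induction m with
  | zero => simp
  | succ m ih =>
    rw [pow_succ', ← mulVec_mulVec, pow_succ', mul_assoc]
    exact (linfty_opNorm_mulVec A _).trans (mul_le_mul_of_nonneg_left ih (norm_nonneg A))

lemma localRhoC_isBoundedUnder (v : Fin n → ℂ) :
    IsBoundedUnder (· ≤ ·) atTop fun m : ℕ => ‖(A ^ m) *ᵥ v‖ ^ ((1 : ℝ) / m) :=
  isBoundedUnder_rpow_one_div (fun _ => norm_nonneg _) (by positivity : (0 : ℝ) < ‖v‖ + 1)
    (norm_nonneg A) <| Eventually.of_forall fun m => (norm_pow_mulVec_le A v m).trans <| by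
      rw [mul_comm]; gcongr; linarith

lemma localRhoC_nonneg (v : Fin n → ℂ) : 0 ≤ localRhoC A v :=
  le_limsup_of_frequently_le (Frequently.of_forall fun _ => Real.rpow_nonneg (norm_nonneg _) _)
    (localRhoC_isBoundedUnder A v)

variable {A}

lemma localRhoC_le_of_eventually_norm_le {v : Fin n → ℂ} {C r : ℝ} (hr : 0 ≤ r)
    (h : ∀ᶠ m in atTop, ‖(A ^ m) *ᵥ v‖ ≤ C * r ^ m) : localRhoC A v ≤ r :=
  limsup_rpow_one_div_le (fun _ => norm_nonneg _) hr h

lemma eventually_norm_le_of_localRhoC_lt {v : Fin n → ℂ} {r : ℝ} (h : localRhoC A v < r) :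
    ∀ᶠ m in atTop, ‖(A ^ m) *ᵥ v‖ ≤ r ^ m := by
  filter_upwards [eventually_lt_of_limsup_lt h (localRhoC_isBoundedUnder A v),
    eventually_ne_atTop 0] with m hm hm0
  rw [← Real.rpow_inv_natCast_pow (norm_nonneg _) hm0, ← one_div]
  exact pow_le_pow_left₀ (Real.rpow_nonneg (norm_nonneg _) _) hm.le m

lemma localRhoC_add_le (v w : Fin n → ℂ) :
    localRhoC A (v + w) ≤ max (localRhoC A v) (localRhoC A w) := by
  refine le_of_forall_gt_imp_ge_of_dense fun r hr => ?_
  obtain ⟨hvr, hwr⟩ := max_lt_iff.mp hr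
  refine localRhoC_le_of_eventually_norm_le (C := 2) ((localRhoC_nonneg A v).trans hvr.le) ?_
  filter_upwards [eventually_norm_le_of_localRhoC_lt hvr, eventually_norm_le_of_localRhoC_lt hwr]
    with m hvm hwm
  rw [mulVec_add]
  linarith [norm_add_le ((A ^ m) *ᵥ v) ((A ^ m) *ᵥ w)]

lemma localRhoC_neg (v : Fin n → ℂ) : localRhoC A (-v) = localRhoC A v := by
  simp only [localRhoC, mulVec_neg, norm_neg]

lemma localRhoC_sub_le (v w : Fin n → ℂ) :
    localRhoC A (v - w) ≤ max (localRhoC A v) (localRhoC A w) := by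
  simpa only [sub_eq_add_neg, localRhoC_neg] using localRhoC_add_le v (-w)

lemma pow_mulVec_eq_smul_of_mulVec_eq_smul {v : Fin n → ℂ} {μ : ℂ} (h : A *ᵥ v = μ • v)
    (m : ℕ) : (A ^ m) *ᵥ v = μ ^ m • v := by
  induction m with
  | zero => simp
  | succ m ih => rw [pow_succ', ← mulVec_mulVec, ih, mulVec_smul, h, smul_smul, pow_succ]

lemma localRhoC_eq_norm_of_mulVec_eq_smul {v : Fin n → ℂ} {μ : ℂ} (hv : v ≠ 0)
    (h : A *ᵥ v = μ • v) : localRhoC A v = ‖μ‖ := by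
  have hlim : Tendsto (fun m : ℕ => ‖v‖ ^ ((1 : ℝ) / m) * ‖μ‖) atTop (𝓝 ‖μ‖) := by
    simpa using (tendsto_rpow_one_div_natCast (norm_pos_iff.mpr hv)).mul_const ‖μ‖
  refine (hlim.congr' ?_).limsup_eq
  filter_upwards [eventually_ne_atTop 0] with m hm
  rw [pow_mulVec_eq_smul_of_mulVec_eq_smul h, norm_smul, norm_pow,
    Real.mul_rpow (by positivity) (norm_nonneg v), one_div,
    Real.pow_rpow_inv_natCast (norm_nonneg μ) hm, mul_comm]

lemma localRhoC_mulVec_le_of_commute {B : Matrix (Fin n) (Fin n) ℂ} (hAB : Commute A B)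
    (v : Fin n → ℂ) : localRhoC A (B *ᵥ v) ≤ localRhoC A v := by
  refine le_of_forall_gt_imp_ge_of_dense fun r hr => ?_
  refine localRhoC_le_of_eventually_norm_le (C := ‖B‖) ((localRhoC_nonneg A v).trans hr.le) ?_
  filter_upwards [eventually_norm_le_of_localRhoC_lt hr] with m hm
  calc ‖(A ^ m) *ᵥ (B *ᵥ v)‖ = ‖B *ᵥ ((A ^ m) *ᵥ v)‖ := by
        rw [mulVec_mulVec, mulVec_mulVec, (hAB.pow_left m).eq]
    _ ≤ ‖B‖ * r ^ m := (linfty_opNorm_mulVec B _).trans (by gcongr)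

end LocalSpectralRadius

section Neumann

lemma HasSum.matrix_mulVec {ι l m R : Type*} [Fintype m] [CommSemiring R] [TopologicalSpace R]
    [IsTopologicalSemiring R] {f : ι → m → R} {a : m → R} (hf : HasSum f a)
    (M : Matrix l m R) : HasSum (fun i => M *ᵥ f i) (M *ᵥ a) :=
  hf.map M.mulVecLin (continuous_const.matrix_mulVec continuous_id)

lemma mulVec_eq_of_hasSum_neumann {𝕜 ι : Type*} [NormedField 𝕜] [Fintype ι] [DecidableEq ι]
    {A : Matrix ι ι 𝕜} {b x : ι → 𝕜} {lam : 𝕜} (hlam : lam ≠ 0)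
    (hx : HasSum (fun j : ℕ => lam⁻¹ ^ (j + 1) • (A ^ j) *ᵥ b) x) :
    (lam • (1 : Matrix ι ι 𝕜) - A) *ᵥ x = b := by
  have hshift : HasSum (fun j : ℕ => lam⁻¹ ^ (j + 2) • (A ^ (j + 1)) *ᵥ b) (x - lam⁻¹ • b) := by
    simpa using (hasSum_nat_add_iff' 1).mpr hx
  have hAx : A *ᵥ x = lam • (x - lam⁻¹ • b) := by
    refine (hx.matrix_mulVec A).unique ?_
    convert hshift.const_smul lam using 2 with j
    rw [mulVec_smul, mulVec_mulVec, ← pow_succ', smul_smul, pow_succ _ (j + 1),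
      mul_left_comm, mul_inv_cancel₀ hlam, mul_one]
  rw [sub_mulVec, smul_mulVec, one_mulVec, hAx, smul_sub, smul_smul, mul_inv_cancel₀ hlam,
    one_smul, sub_sub_cancel]

lemma norm_inv_pow_succ_smul_le {𝕜 E : Type*} [NormedField 𝕜] [SeminormedAddCommGroup E]
    [NormedSpace 𝕜 E] {lam : 𝕜} {w : E} {r : ℝ} {k j : ℕ} (hw : ‖w‖ ≤ r ^ (k + j)) :
    ‖lam⁻¹ ^ (j + 1) • w‖ ≤ r ^ k * ‖lam‖⁻¹ * (r / ‖lam‖) ^ j := by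
  rw [norm_smul, norm_pow, norm_inv]
  calc ‖lam‖⁻¹ ^ (j + 1) * ‖w‖ ≤ ‖lam‖⁻¹ ^ (j + 1) * r ^ (k + j) := by gcongr
    _ = r ^ k * ‖lam‖⁻¹ * (r / ‖lam‖) ^ j := by rw [div_pow, pow_add]; ring

variable {n : ℕ} {A : Matrix (Fin n) (Fin n) ℂ} {b x : Fin n → ℂ} {lam : ℂ}

lemma summable_neumann (hlam : localRhoC A b < ‖lam‖) :
    Summable fun j : ℕ => lam⁻¹ ^ (j + 1) • (A ^ j) *ᵥ b := by
  obtain ⟨r, hbr, hr⟩ := exists_between hlam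
  have hr0 : 0 ≤ r := (localRhoC_nonneg A b).trans hbr.le
  refine .of_norm_bounded_eventually_nat ((summable_geometric_of_lt_one
    (div_nonneg hr0 (norm_nonneg lam)) ((div_lt_one (hr0.trans_lt hr)).mpr hr)).mul_left
    (r ^ 0 * ‖lam‖⁻¹)) ?_
  filter_upwards [eventually_norm_le_of_localRhoC_lt hbr] with j hj
  exact norm_inv_pow_succ_smul_le (by rwa [zero_add])

lemma localRhoC_le_of_hasSum_neumann
    (hx : HasSum (fun j : ℕ => lam⁻¹ ^ (j + 1) • (A ^ j) *ᵥ b) x) {s : ℝ}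
    (hbs : localRhoC A b < s) (hs : s < ‖lam‖) : localRhoC A x ≤ s := by
  have hs0 : 0 ≤ s := (localRhoC_nonneg A b).trans hbs.le
  have hR : 0 < ‖lam‖ := hs0.trans_lt hs
  have hq : s / ‖lam‖ < 1 := (div_lt_one hR).mpr hs
  obtain ⟨N, hN⟩ := eventually_atTop.mp (eventually_norm_le_of_localRhoC_lt hbs)
  refine localRhoC_le_of_eventually_norm_le (C := ‖lam‖⁻¹ * (1 - s / ‖lam‖)⁻¹) hs0 ?_
  filter_upwards [eventually_ge_atTop N] with m hm
  have hAx : HasSum (fun j : ℕ => lam⁻¹ ^ (j + 1) • (A ^ (m + j)) *ᵥ b) ((A ^ m) *ᵥ x) := by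
    simpa only [mulVec_smul, mulVec_mulVec, pow_add] using hx.matrix_mulVec (A ^ m)
  calc ‖(A ^ m) *ᵥ x‖ ≤ s ^ m * ‖lam‖⁻¹ * (1 - s / ‖lam‖)⁻¹ :=
        hAx.norm_le_of_bounded ((hasSum_geometric_of_lt_one (by positivity) hq).mul_left _)
          fun j => norm_inv_pow_succ_smul_le (hN _ (by omega))
    _ = ‖lam‖⁻¹ * (1 - s / ‖lam‖)⁻¹ * s ^ m := by ring

lemma localRhoC_le_localRhoC_of_hasSum_neumann
    (hx : HasSum (fun j : ℕ => lam⁻¹ ^ (j + 1) • (A ^ j) *ᵥ b) x)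
    (hlam : localRhoC A b < ‖lam‖) : localRhoC A x ≤ localRhoC A b := by
  refine le_of_forall_gt_imp_ge_of_dense fun r hr => ?_
  obtain ⟨s, hbs, hs⟩ := exists_between (lt_min hr hlam)
  exact (localRhoC_le_of_hasSum_neumann hx hbs (hs.trans_le (min_le_right _ _))).trans
    (hs.le.trans (min_le_left _ _))

end Neumann

theorem stmt9_general {n : ℕ} (A : Matrix (Fin n) (Fin n) ℂ) (b : Fin n → ℂ)
    (lam : ℂ) (hlam : localRhoC A b < ‖lam‖) :
    ∃ x0 : Fin n → ℂ,
      Tendsto (fun m : ℕ => ∑ j ∈ Finset.range (m + 1), lam⁻¹ ^ (j + 1) • (A ^ j).mulVec b)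
        atTop (𝓝 x0) ∧
      (lam • (1 : Matrix (Fin n) (Fin n) ℂ) - A).mulVec x0 = b ∧
      localRhoC A x0 = localRhoC A b ∧
      ∀ x : Fin n → ℂ, (lam • (1 : Matrix (Fin n) (Fin n) ℂ) - A).mulVec x = b → x ≠ x0 →
        localRhoC A x = ‖lam‖ := by
  have hlam0 : lam ≠ 0 := norm_pos_iff.mp ((localRhoC_nonneg A b).trans_lt hlam)
  obtain ⟨x0, hx0⟩ := summable_neumann hlam
  have hsol := mulVec_eq_of_hasSum_neumann hlam0 hx0
  have hcomm : Commute A (lam • 1 - A) := ((Commute.one_right A).smul_right lam).sub_right rfl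
  have hρ : localRhoC A x0 = localRhoC A b := le_antisymm
    (localRhoC_le_localRhoC_of_hasSum_neumann hx0 hlam)
    (hsol ▸ localRhoC_mulVec_le_of_commute hcomm x0)
  refine ⟨x0, ?_, hsol, hρ, fun x hx hne => ?_⟩
  · simpa [Function.comp_def] using hx0.tendsto_sum_nat.comp (tendsto_add_atTop_nat 1)
  have hy : A *ᵥ (x - x0) = lam • (x - x0) := by
    have h0 : (lam • (1 : Matrix (Fin n) (Fin n) ℂ) - A) *ᵥ (x - x0) = 0 := by
      rw [mulVec_sub, hx, hsol, sub_self]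
    rw [sub_mulVec, smul_mulVec, one_mulVec, sub_eq_zero] at h0
    exact h0.symm
  have hρy := localRhoC_eq_norm_of_mulVec_eq_smul (sub_ne_zero.mpr hne) hy
  apply le_antisymm
  · calc localRhoC A x = localRhoC A (x0 + (x - x0)) := by rw [add_sub_cancel]
      _ ≤ max (localRhoC A x0) (localRhoC A (x - x0)) := localRhoC_add_le x0 (x - x0)
      _ = ‖lam‖ := by rw [hρ, hρy, max_eq_right hlam.le]
  · have hsub := localRhoC_sub_le (A := A) x x0
    rw [hρy, hρ] at hsub
    exact (le_max_iff.mp hsub).resolve_right (not_le.mpr hlam)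

theorem stmt9 {n : ℕ} (A : Matrix (Fin n) (Fin n) ℂ) (b : Fin n → ℂ) (hb : b ≠ 0)
    (lam : ℂ) (hlam : localRhoC A b < ‖lam‖) :
    ∃ x0 : Fin n → ℂ,
      Tendsto (fun m : ℕ => ∑ j ∈ Finset.range (m + 1), lam⁻¹ ^ (j + 1) • (A ^ j).mulVec b)
        atTop (𝓝 x0) ∧
      (lam • (1 : Matrix (Fin n) (Fin n) ℂ) - A).mulVec x0 = b ∧
      localRhoC A x0 = localRhoC A b ∧
      ∀ x : Fin n → ℂ, (lam • (1 : Matrix (Fin n) (Fin n) ℂ) - A).mulVec x = b → x ≠ x0 →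
        localRhoC A x = ‖lam‖ :=
  stmt9_general A b lam hlam
end
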